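/- arXiv:1912.01763 — 6 statements merged into one kernel-verified Lean document; each statement's English description precedes it below -/
import Mathlib

section
/- For the sequence x̄^k = 2^{-(k-1)} and ȳ^k = 2^{-(k-1)} (for k ≥ 1), one has g(x̄^k, ȳ^k) = 2x̄^k - ȳ^k = 2^{-(k-1)} > 0 for every k, yet the corresponding lower bounds f^{LBD,k} = -x̄^k converge to 0, which is strictly less than the optimal value 1/2 of (CEx). -/
theorem stmt_2 :
    (∀ k : ℕ, 1 ≤ k →
      2 * ((1/2 : ℝ) ^ (k - 1)) - (1/2 : ℝ) ^ (k - 1) = (1/2 : ℝ) ^ (k - 1) ∧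
      0 < (1/2 : ℝ) ^ (k - 1)) ∧
    Filter.Tendsto (fun k : ℕ => -((1/2 : ℝ) ^ (k - 1))) Filter.atTop (nhds 0) ∧
    (0 : ℝ) < 1/2 ∧
    IsLeast ((fun x : ℝ => -x) ''
      {x : ℝ | x ∈ Set.Icc (-1 : ℝ) 1 ∧ ∀ y ∈ Set.Icc (-1 : ℝ) 1, 2 * x - y ≤ 0}) (1/2) := by
  refine ⟨fun k hk => ⟨by ring, by positivity⟩, ?_, by norm_num, ?_, ?_⟩
  · have h : Filter.Tendsto (fun n : ℕ => ((1/2 : ℝ) ^ n)) Filter.atTop (nhds 0) :=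
      tendsto_pow_atTop_nhds_zero_of_lt_one (by norm_num) (by norm_num)
    have h2 : Filter.Tendsto (fun k : ℕ => k - 1) Filter.atTop Filter.atTop :=
      Filter.tendsto_sub_atTop_nat 1
    simpa using (h.comp h2).neg
  · exact ⟨-(1/2), ⟨⟨by norm_num, by norm_num⟩,
      fun y hy => by nlinarith [hy.1]⟩, by norm_num⟩
  · rintro v ⟨x, ⟨⟨hx1, hx2⟩, hall⟩, rfl⟩
    have := hall (-1) ⟨le_refl _, by norm_num⟩
    linarith
end

section
/- For each k ≥ 1, the point x̄^k = 2^{-(k-1)} is the unique minimizer of f(x) = -x over {x ∈ [-1,1] : 2x - ȳ^j ≤ 0 for all j < k}, where ȳ^j = 2^{-(j-1)}; equivalently, this feasible set equals [-1, 2^{-(k-1)}]. -/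
lemma stmt_3_aux (k : ℕ) (hk : 1 ≤ k) :
    {x : ℝ | x ∈ Set.Icc (-1 : ℝ) 1 ∧
        ∀ j : ℕ, 1 ≤ j → j < k → 2 * x - (1/2 : ℝ) ^ (j - 1) ≤ 0}
      = Set.Icc (-1 : ℝ) ((1/2 : ℝ) ^ (k - 1)) := by
  ext x
  simp only [Set.mem_setOf_eq, Set.mem_Icc]
  constructor
  · rintro ⟨⟨h1, h2⟩, h3⟩
    refine ⟨h1, ?_⟩
    rcases Nat.lt_or_ge k 2 with hk2 | hk2
    · interval_cases k
      simpa using h2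
    · have hkey := h3 (k - 1) (by omega) (by omega)
      have heq2 : (1/2 : ℝ) ^ (k - 1 - 1) = 2 * (1/2 : ℝ) ^ (k - 1) := by
        nth_rewrite 2 [show k - 1 = (k - 1 - 1) + 1 from by omega]
        rw [pow_succ]; ring
      rw [heq2] at hkey
      linarith
  · rintro ⟨h1, h2⟩
    have hle1 : (1/2 : ℝ) ^ (k - 1) ≤ 1 := pow_le_one₀ (by norm_num) (by norm_num)
    refine ⟨⟨h1, h2.trans hle1⟩, ?_⟩
    intro j hj1 hjk
    have hmono : (1/2 : ℝ) ^ (k - 1) ≤ (1/2 : ℝ) ^ j :=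
      pow_le_pow_of_le_one (by norm_num) (by norm_num) (by omega)
    have heq2 : (1/2 : ℝ) ^ (j - 1) = 2 * (1/2 : ℝ) ^ j := by
      nth_rewrite 2 [show j = (j - 1) + 1 from by omega]
      rw [pow_succ]; ring
    rw [heq2]
    linarith

theorem stmt_3 (k : ℕ) (hk : 1 ≤ k) :
    {x : ℝ | x ∈ Set.Icc (-1 : ℝ) 1 ∧
        ∀ j : ℕ, 1 ≤ j → j < k → 2 * x - (1/2 : ℝ) ^ (j - 1) ≤ 0}
      = Set.Icc (-1 : ℝ) ((1/2 : ℝ) ^ (k - 1)) ∧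
    (∀ x : ℝ,
      (x ∈ {x : ℝ | x ∈ Set.Icc (-1 : ℝ) 1 ∧
          ∀ j : ℕ, 1 ≤ j → j < k → 2 * x - (1/2 : ℝ) ^ (j - 1) ≤ 0} ∧
        ∀ x' ∈ {x : ℝ | x ∈ Set.Icc (-1 : ℝ) 1 ∧
          ∀ j : ℕ, 1 ≤ j → j < k → 2 * x - (1/2 : ℝ) ^ (j - 1) ≤ 0}, -x ≤ -x')
      ↔ x = (1/2 : ℝ) ^ (k - 1)) := by
  have heq := stmt_3_aux k hk
  refine ⟨heq, fun x => ?_⟩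
  rw [heq]
  have hneg : (-1 : ℝ) ≤ (1/2 : ℝ) ^ (k - 1) := by
    have : (0:ℝ) ≤ (1/2 : ℝ) ^ (k - 1) := by positivity
    linarith
  constructor
  · rintro ⟨hx, hmin⟩
    have := hmin ((1/2 : ℝ) ^ (k - 1)) ⟨hneg, le_refl _⟩
    have := hx.2
    linarith
  · rintro rfl
    exact ⟨⟨hneg, le_refl _⟩, fun x' hx' => by linarith [hx'.2]⟩
end

section
/- Let X, Y be compact metric spaces and g : X × Y → ℝ continuous. Suppose (x̄^k) is a sequence in X converging to some x* ∈ X, and (ȳ^k) is a sequence in Y such that g(x̄^ℓ, ȳ^k) ≤ 0 whenever ℓ > k. Then limsup_k g(x̄^k, ȳ^k) ≤ 0; in particular, if additionally g(x̄^k, ȳ^k) > 0 for all k, then g(x̄^k, ȳ^k) → 0. -/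
theorem stmt_6 {X Y : Type*} [MetricSpace X] [CompactSpace X]
    [MetricSpace Y] [CompactSpace Y]
    (g : X × Y → ℝ) (hg : Continuous g)
    (xb : ℕ → X) (x_star : X) (hx : Filter.Tendsto xb Filter.atTop (nhds x_star))
    (yb : ℕ → Y) (hc : ∀ ℓ k : ℕ, k < ℓ → g (xb ℓ, yb k) ≤ 0) :
    Filter.limsup (fun k => g (xb k, yb k)) Filter.atTop ≤ 0 ∧
    ((∀ k, 0 < g (xb k, yb k)) →
      Filter.Tendsto (fun k => g (xb k, yb k)) Filter.atTop (nhds 0)) := by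
  -- g(x*, yb k) ≤ 0 for all k
  have hstar : ∀ k, g (x_star, yb k) ≤ 0 := by
    intro k
    have htend : Filter.Tendsto (fun ℓ => g (xb ℓ, yb k)) Filter.atTop
        (nhds (g (x_star, yb k))) := by
      exact (hg.continuousAt.tendsto).comp (hx.prodMk_nhds tendsto_const_nhds)
    refine le_of_tendsto htend ?_
    filter_upwards [Filter.eventually_gt_atTop k] with ℓ hℓ
    exact hc ℓ k hℓ
  -- boundedness of the sequence
  have : Nonempty (X × Y) := ⟨(xb 0, yb 0)⟩
  obtain ⟨pm, -, hpm⟩ := isCompact_univ.exists_isMinOn (Set.univ_nonempty)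
    hg.continuousOn
  obtain ⟨pM, -, hpM⟩ := isCompact_univ.exists_isMaxOn (Set.univ_nonempty)
    hg.continuousOn
  have hbdd_le : Filter.IsBoundedUnder (· ≤ ·) Filter.atTop
      (fun k => g (xb k, yb k)) :=
    Filter.isBoundedUnder_of ⟨g pM, fun k => hpM (Set.mem_univ _)⟩
  have hbdd_ge : Filter.IsBoundedUnder (· ≥ ·) Filter.atTop
      (fun k => g (xb k, yb k)) :=
    Filter.isBoundedUnder_of ⟨g pm, fun k => hpm (Set.mem_univ _)⟩
  -- key eventual bound
  have key : ∀ ε : ℝ, 0 < ε → ∀ᶠ k in Filter.atTop, g (xb k, yb k) ≤ ε := by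
    intro ε hε
    have hu : UniformContinuous g := CompactSpace.uniformContinuous_of_continuous hg
    obtain ⟨δ, hδ, hδ'⟩ := Metric.uniformContinuous_iff.mp hu ε hε
    have hxd : ∀ᶠ k in Filter.atTop, dist (xb k) x_star < δ :=
      (Metric.tendsto_nhds.mp hx) δ hδ
    filter_upwards [hxd] with k hk
    have hdist : dist ((xb k, yb k) : X × Y) (x_star, yb k) < δ := by
      rw [Prod.dist_eq]
      simp [dist_self, hk, hδ]
    have := hδ' hdist
    have habs : |g (xb k, yb k) - g (x_star, yb k)| < ε := by
      simpa [Real.dist_eq] using this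
    have := abs_lt.mp habs
    linarith [hstar k, this.2]
  have hlimsup : Filter.limsup (fun k => g (xb k, yb k)) Filter.atTop ≤ 0 := by
    refine le_of_forall_pos_le_add fun ε hε => ?_
    have := Filter.limsup_le_of_le (hbdd_ge.isCoboundedUnder_flip) (key ε hε)
    simpa using this
  refine ⟨hlimsup, fun hpos => ?_⟩
  have hliminf : (0 : ℝ) ≤ Filter.liminf (fun k => g (xb k, yb k)) Filter.atTop := by
    refine Filter.le_liminf_of_le (hbdd_le.isCoboundedUnder_flip) ?_
    filter_upwards with k
    exact (hpos k).le
  exact tendsto_of_le_liminf_of_limsup_le hliminf hlimsup hbdd_le hbdd_ge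
end

section
/- Let X be a compact metric space, Y a nonempty compact metric space, g : X × Y → ℝ continuous, and α ∈ (0,1). Suppose (x̄^k) ⊂ X and (ȳ^k) ⊂ Y satisfy: (i) g(x̄^ℓ, ȳ^k) ≤ 0 for all ℓ > k; and (ii) g(x̄^k, ȳ^k) ≥ α · g*(x̄^k) > 0 for all k, where g*(x) = max_{y ∈ Y} g(x,y). Then every limit point x* of (x̄^k) satisfies g*(x*) = 0; in particular x* is feasible for the SIP constraint g(x*, y) ≤ 0 for all y ∈ Y. -/
open Filter Topology

theorem stmt_8 {X Y : Type*} [MetricSpace X] [CompactSpace X]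
    [MetricSpace Y] [CompactSpace Y] [Nonempty Y]
    (g : X × Y → ℝ) (hg : Continuous g)
    (α : ℝ) (hα : α ∈ Set.Ioo (0 : ℝ) 1)
    (xb : ℕ → X) (yb : ℕ → Y)
    (hc : ∀ ℓ k : ℕ, k < ℓ → g (xb ℓ, yb k) ≤ 0)
    (happrox : ∀ k : ℕ,
      α * (⨆ y : Y, g (xb k, y)) ≤ g (xb k, yb k) ∧ 0 < α * (⨆ y : Y, g (xb k, y)))
    (x_star : X) (hcluster : MapClusterPt x_star Filter.atTop xb) :
    (⨆ y : Y, g (x_star, y)) = 0 ∧ ∀ y : Y, g (x_star, y) ≤ 0 := by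
  obtain ⟨ψ, hψ, hψt⟩ := TopologicalSpace.FirstCountableTopology.tendsto_subseq hcluster
  obtain ⟨y_star, ψ2, hψ2, hψ2t⟩ := CompactSpace.tendsto_subseq (yb ∘ ψ)
  set σ : ℕ → ℕ := ψ ∘ ψ2 with hσdef
  have hσ : StrictMono σ := hψ.comp hψ2
  have hxt : Tendsto (fun j => xb (σ j)) atTop (𝓝 x_star) :=
    hψt.comp hψ2.tendsto_atTop
  have hyt : Tendsto (fun j => yb (σ j)) atTop (𝓝 y_star) := hψ2t
  have hpair : Tendsto (fun j => ((xb (σ j), yb (σ j)) : X × Y)) atTop (𝓝 (x_star, y_star)) :=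
    hxt.prodMk_nhds hyt
  -- bounded above
  have hbdd : ∀ x : X, BddAbove (Set.range fun y : Y => g (x, y)) := by
    intro x
    have : IsCompact (Set.range fun y : Y => g (x, y)) := by
      have : Continuous fun y : Y => g (x, y) := hg.comp (Continuous.prodMk_right x)
      simpa [Set.image_univ] using (isCompact_univ.image this)
    exact this.bddAbove
  -- Claim A : g(x*, y*) ≤ 0
  have hA : g (x_star, y_star) ≤ 0 := by
    have h1 : ∀ j : ℕ, g (x_star, yb (σ j)) ≤ 0 := by
      intro j
      have ht : Tendsto (fun ℓ => g (xb (σ ℓ), yb (σ j))) atTop (𝓝 (g (x_star, yb (σ j)))) :=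
        (hg.tendsto _).comp (hxt.prodMk_nhds tendsto_const_nhds)
      refine le_of_tendsto ht (eventually_atTop.2 ⟨j + 1, fun ℓ hℓ => ?_⟩)
      exact hc _ _ (hσ (lt_of_lt_of_le (Nat.lt_succ_self j) hℓ))
    have ht : Tendsto (fun j => g (x_star, yb (σ j))) atTop (𝓝 (g (x_star, y_star))) :=
      (hg.tendsto _).comp (tendsto_const_nhds.prodMk_nhds hyt)
    exact le_of_tendsto ht (Eventually.of_forall h1)
  constructor
  · -- sup = 0
    have hle : ∀ y : Y, g (x_star, y) ≤ 0 := by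
      intro y
      by_contra hy
      push_neg at hy
      -- eventually φ(x σ j) ≥ g(x σ j, y) with g(x σ j, y) → g(x*,y) > 0
      have htg : Tendsto (fun j => g (xb (σ j), y)) atTop (𝓝 (g (x_star, y))) :=
        (hg.tendsto _).comp (hxt.prodMk_nhds tendsto_const_nhds)
      have hev : ∀ᶠ j in atTop, g (x_star, y) / 2 < g (xb (σ j), y) :=
        htg.eventually_const_lt (by linarith)
      have hgy : Tendsto (fun j => g (xb (σ j), yb (σ j))) atTop (𝓝 (g (x_star, y_star))) :=
        (hg.tendsto _).comp hpair
      have hge : ∀ᶠ j in atTop, α * (g (x_star, y) / 2) ≤ g (xb (σ j), yb (σ j)) := by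
        filter_upwards [hev] with j hj
        have h1 : g (xb (σ j), y) ≤ ⨆ y' : Y, g (xb (σ j), y') := le_ciSup (hbdd _) y
        have h2 := (happrox (σ j)).1
        nlinarith [hα.1]
      have : α * (g (x_star, y) / 2) ≤ g (x_star, y_star) := ge_of_tendsto hgy hge
      nlinarith [hα.1]
    have h1 : (⨆ y : Y, g (x_star, y)) ≤ 0 := ciSup_le hle
    have hgy : Tendsto (fun j => g (xb (σ j), yb (σ j))) atTop (𝓝 (g (x_star, y_star))) :=
      (hg.tendsto _).comp hpair
    have h2 : 0 ≤ g (x_star, y_star) := by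
      refine le_of_tendsto_of_tendsto' tendsto_const_nhds hgy fun j => ?_
      have := (happrox (σ j)).2
      have := (happrox (σ j)).1
      linarith
    have h3 : g (x_star, y_star) ≤ ⨆ y : Y, g (x_star, y) := le_ciSup (hbdd _) y_star
    linarith
  · intro y
    by_contra hy
    push_neg at hy
    have htg : Tendsto (fun j => g (xb (σ j), y)) atTop (𝓝 (g (x_star, y))) :=
      (hg.tendsto _).comp (hxt.prodMk_nhds tendsto_const_nhds)
    have hev : ∀ᶠ j in atTop, g (x_star, y) / 2 < g (xb (σ j), y) :=
      htg.eventually_const_lt (by linarith)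
    have hgy : Tendsto (fun j => g (xb (σ j), yb (σ j))) atTop (𝓝 (g (x_star, y_star))) :=
      (hg.tendsto _).comp hpair
    have hge : ∀ᶠ j in atTop, α * (g (x_star, y) / 2) ≤ g (xb (σ j), yb (σ j)) := by
      filter_upwards [hev] with j hj
      have h1 : g (xb (σ j), y) ≤ ⨆ y' : Y, g (xb (σ j), y') := le_ciSup (hbdd _) y
      have h2 := (happrox (σ j)).1
      nlinarith [hα.1]
    have : α * (g (x_star, y) / 2) ≤ g (x_star, y_star) := ge_of_tendsto hgy hge
    nlinarith [hα.1]
end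

section
/- Let X be a nonempty compact metric space, Y a nonempty compact metric space, f : X → ℝ and g : X × Y → ℝ continuous, and α ∈ (0,1). Suppose (x̄^k) ⊂ X and (ȳ^k) ⊂ Y satisfy: (i) f(x̄^k) ≤ f* := inf {f(x) : x ∈ X, g(x,y) ≤ 0 ∀ y ∈ Y} for all k; (ii) g(x̄^ℓ, ȳ^k) ≤ 0 for all ℓ > k; (iii) g(x̄^k, ȳ^k) ≥ α · max_{y∈Y} g(x̄^k, y) > 0 for all k. Then f(x̄^k) → f*. -/
theorem stmt_9 {X Y : Type*} [MetricSpace X] [CompactSpace X] [Nonempty X]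
    [MetricSpace Y] [CompactSpace Y] [Nonempty Y]
    (f : X → ℝ) (hf : Continuous f)
    (g : X × Y → ℝ) (hg : Continuous g)
    (α : ℝ) (hα : α ∈ Set.Ioo (0 : ℝ) 1)
    (xb : ℕ → X) (yb : ℕ → Y)
    (hlb : ∀ k : ℕ, f (xb k) ≤ sInf (f '' {x : X | ∀ y : Y, g (x, y) ≤ 0}))
    (hc : ∀ ℓ k : ℕ, k < ℓ → g (xb ℓ, yb k) ≤ 0)
    (happrox : ∀ k : ℕ,
      α * (⨆ y : Y, g (xb k, y)) ≤ g (xb k, yb k) ∧ 0 < α * (⨆ y : Y, g (xb k, y))) :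
    Filter.Tendsto (fun k => f (xb k)) Filter.atTop
      (nhds (sInf (f '' {x : X | ∀ y : Y, g (x, y) ≤ 0}))) := by
  obtain ⟨hα0, hα1⟩ := hα
  set S : Set ℝ := f '' {x : X | ∀ y : Y, g (x, y) ≤ 0} with hSdef
  have hSbdd : BddBelow S :=
    ((isCompact_range hf).bddBelow).mono (Set.image_subset_range _ _)
  have hbddg : ∀ x : X, BddAbove (Set.range fun y : Y => g (x, y)) := fun x =>
    (isCompact_range (hg.comp (Continuous.prodMk_right x))).bddAbove
  apply Filter.tendsto_of_subseq_tendsto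
  intro ns hns
  -- extract subsequence kf = ns ∘ φ ∘ ψ with xb∘kf → x', yb∘kf → y'
  obtain ⟨x', φ, hφ, hxc⟩ := CompactSpace.tendsto_subseq (fun n => xb (ns n))
  obtain ⟨y', ψ, hψ, hyc⟩ := CompactSpace.tendsto_subseq (fun n => yb (ns (φ n)))
  refine ⟨φ ∘ ψ, ?_⟩
  set k : ℕ → ℕ := fun j => ns (φ (ψ j)) with hkdef
  have hxk : Filter.Tendsto (fun j => xb (k j)) Filter.atTop (nhds x') :=
    hxc.comp hψ.tendsto_atTop
  have hyk : Filter.Tendsto (fun j => yb (k j)) Filter.atTop (nhds y') := hyc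
  -- the index sequence tends to infinity strictly enough
  have hktop : Filter.Tendsto k Filter.atTop Filter.atTop :=
    hns.comp ((hφ.comp hψ).tendsto_atTop)
  -- g(x', yb (k i)) ≤ 0 for all i
  have hgi : ∀ i : ℕ, g (x', yb (k i)) ≤ 0 := by
    intro i
    have htend : Filter.Tendsto (fun j => g (xb (k j), yb (k i))) Filter.atTop
        (nhds (g (x', yb (k i)))) :=
      (hg.tendsto _).comp (hxk.prodMk_nhds tendsto_const_nhds)
    refine le_of_tendsto htend ?_
    have : ∀ᶠ j in Filter.atTop, k i < k j :=
      hktop.eventually_gt_atTop (k i)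
    exact this.mono fun j hj => hc _ _ hj
  have hgy' : g (x', y') ≤ 0 := by
    have htend : Filter.Tendsto (fun i => g (x', yb (k i))) Filter.atTop
        (nhds (g (x', y'))) :=
      (hg.tendsto _).comp (tendsto_const_nhds.prodMk_nhds hyk)
    exact le_of_tendsto htend (Filter.Eventually.of_forall hgi)
  -- convergence of the diagonal values
  have hgdiag : Filter.Tendsto (fun j => g (xb (k j), yb (k j))) Filter.atTop
      (nhds (g (x', y'))) :=
    (hg.tendsto _).comp (hxk.prodMk_nhds hyk)
  -- x' is feasible
  have hfeas : ∀ y : Y, g (x', y) ≤ 0 := by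
    intro y0
    by_contra hpos
    push_neg at hpos
    have hαgy : Filter.Tendsto (fun j => α * g (xb (k j), y0)) Filter.atTop
        (nhds (α * g (x', y0))) :=
      ((hg.tendsto _).comp (hxk.prodMk_nhds tendsto_const_nhds)).const_mul α
    have hle : ∀ j, α * g (xb (k j), y0) ≤ g (xb (k j), yb (k j)) := by
      intro j
      refine le_trans ?_ (happrox (k j)).1
      have := le_ciSup (hbddg (xb (k j))) y0
      nlinarith
    have hlim : α * g (x', y0) ≤ g (x', y') :=
      le_of_tendsto_of_tendsto' hαgy hgdiag hle
    nlinarith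
  -- conclude f(x') = sInf S
  have hmem : f x' ∈ S := ⟨x', hfeas, rfl⟩
  have h1 : sInf S ≤ f x' := csInf_le hSbdd hmem
  have hftend : Filter.Tendsto (fun j => f (xb (k j))) Filter.atTop (nhds (f x')) :=
    (hf.tendsto _).comp hxk
  have h2 : f x' ≤ sInf S :=
    le_of_tendsto hftend (Filter.Eventually.of_forall fun j => hlb (k j))
  have : f x' = sInf S := le_antisymm h2 h1
  rw [← this]
  exact hftend
end

section
/- There exist a compact set X = [-1,1], a compact set Y = [-1,1], continuous functions f(x) = -x and g(x,y) = 2x - y, and sequences (x̄^k), (ȳ^k) such that: x̄^k minimizes f over {x ∈ X : g(x, ȳ^j) ≤ 0, j < k}; g(x̄^k, ȳ^k) > 0 for all k; but lim_k f(x̄^k) = 0 < 1/2 = inf {f(x) : x ∈ X, g(x,y) ≤ 0 ∀ y ∈ Y}. Hence the lower bounding procedure with arbitrary separating points ȳ^k need not converge to the SIP optimal value. -/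
theorem stmt_16 :
    ∃ xb yb : ℕ → ℝ,
      (∀ k : ℕ, yb k ∈ Set.Icc (-1 : ℝ) 1) ∧
      (∀ k : ℕ, 1 ≤ k →
        xb k ∈ {x : ℝ | x ∈ Set.Icc (-1 : ℝ) 1 ∧
          ∀ j : ℕ, 1 ≤ j → j < k → 2 * x - yb j ≤ 0} ∧
        ∀ x ∈ {x : ℝ | x ∈ Set.Icc (-1 : ℝ) 1 ∧
          ∀ j : ℕ, 1 ≤ j → j < k → 2 * x - yb j ≤ 0}, -(xb k) ≤ -x) ∧
      (∀ k : ℕ, 1 ≤ k → 0 < 2 * xb k - yb k) ∧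
      Filter.Tendsto (fun k => -(xb k)) Filter.atTop (nhds 0) ∧
      (0 : ℝ) < 1/2 ∧
      IsLeast ((fun x : ℝ => -x) ''
        {x : ℝ | x ∈ Set.Icc (-1 : ℝ) 1 ∧
          ∀ y ∈ Set.Icc (-1 : ℝ) 1, 2 * x - y ≤ 0}) (1/2) := by
  refine ⟨fun k => (1/2 : ℝ) ^ (k - 1), fun k => (1/2 : ℝ) ^ (k - 1), ?_, ?_, ?_, ?_, by norm_num, ?_⟩
  · intro k
    constructor
    · have : (0:ℝ) ≤ (1/2:ℝ) ^ (k-1) := by positivity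
      linarith
    · exact pow_le_one₀ (by norm_num) (by norm_num)
  · intro k hk
    constructor
    · refine ⟨⟨?_, pow_le_one₀ (by norm_num) (by norm_num)⟩, ?_⟩
      · have : (0:ℝ) ≤ (1/2:ℝ) ^ (k-1) := by positivity
        linarith
      · intro j hj hjk
        have h2 : (2:ℝ) * (1/2)^(k-1) = (1/2)^(k-2) := by
          have : k - 1 = (k - 2) + 1 := by omega
          rw [this, pow_succ]; ring
        rw [h2]
        have : (1/2:ℝ)^(k-2) ≤ (1/2)^(j-1) :=
          pow_le_pow_of_le_one (by norm_num) (by norm_num) (by omega)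
        linarith
    · intro x hx
      obtain ⟨⟨hx1, hx2⟩, hxc⟩ := hx
      simp only [neg_le_neg_iff]
      rcases eq_or_lt_of_le hk with h1 | h1
      · have : k = 1 := h1.symm
        subst this; simpa using hx2
      · have hc := hxc (k-1) (by omega) (by omega)
        have h2 : (2:ℝ) * (1/2)^(k-1) = (1/2)^(k-2) := by
          have : k - 1 = (k - 2) + 1 := by omega
          rw [this, pow_succ]; ring
        have hk2 : k - 1 - 1 = k - 2 := by omega
        have hc' : 2 * x - (1/2:ℝ) ^ (k - 2) ≤ 0 := by simpa [hk2] using hc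
        nlinarith [pow_pos (by norm_num : (0:ℝ) < 1/2) (k-2)]
  · intro k hk
    have : (0:ℝ) < (1/2:ℝ) ^ (k-1) := by positivity
    linarith
  · have : Filter.Tendsto (fun k : ℕ => ((1/2:ℝ) ^ k)) Filter.atTop (nhds 0) :=
      tendsto_pow_atTop_nhds_zero_of_lt_one (by norm_num) (by norm_num)
    have h2 : Filter.Tendsto (fun k : ℕ => ((1/2:ℝ) ^ (k-1))) Filter.atTop (nhds 0) := by
      rw [show (fun k : ℕ => ((1/2:ℝ) ^ (k-1))) = (fun k : ℕ => ((1/2:ℝ) ^ k)) ∘ (fun k => k - 1) from rfl]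
      exact this.comp (Filter.tendsto_atTop_atTop.mpr fun b => ⟨b + 1, fun a ha => by omega⟩)
    simpa using h2.neg
  · constructor
    · exact ⟨-1/2, ⟨⟨by norm_num, by norm_num⟩, fun y hy => by obtain ⟨hy1, _⟩ := hy; linarith⟩, by norm_num⟩
    · rintro v ⟨x, ⟨⟨hx1, hx2⟩, hxc⟩, rfl⟩
      have := hxc (-1) ⟨le_refl _, by norm_num⟩
      linarith
end
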